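/- Let p₁, ..., p_K be independent random variables with common mean θ and Var(p_i) = θ(1−θ)/N_i, and p = max_i p_i, N_{(1)} = min_i N_i. Then for any i ≠ j, |E[p(p_j − p_i)]| ≤ (2√K + 1)·θ(1−θ)/N_{(1)}. -/

import Mathlib

/-!
Split `max_k X_k · (X_j - X_i)` as `(max_k X_k - X_i)(X_j - X_i) + X_i (X_j - X_i)`.
Independence and the common mean make the expectation of the second term `-Var X_i`, and, for
`V ≥ max_k Var X_k` (here `θ(1-θ)/N_(1)`), give `E[(X_k - X_i)²] = Var X_k + Var X_i ≤ 2V`.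
As the maximum is one of the `X_k`, `(max_k X_k - X_i)² ≤ ∑_k (X_k - X_i)²`, so Cauchy–Schwarz
bounds the first term by `√(2KV) · √(2V) = 2√K · V`.
-/

open MeasureTheory ProbabilityTheory

section

variable {Ω : Type*} [MeasurableSpace Ω] {μ : Measure Ω}

lemma abs_integral_mul_le_sqrt_mul_sqrt {f g : Ω → ℝ} (hf : MemLp f 2 μ) (hg : MemLp g 2 μ) :
    |∫ ω, f ω * g ω ∂μ| ≤ √(∫ ω, f ω ^ 2 ∂μ) * √(∫ ω, g ω ^ 2 ∂μ) := by
  have holder := integral_mul_norm_le_Lp_mul_Lq (μ := μ) Real.HolderConjugate.two_two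
    (by simpa using hf) (by simpa using hg)
  simp only [Real.norm_eq_abs, Real.rpow_two, sq_abs, ← Real.sqrt_eq_rpow] at holder
  calc |∫ ω, f ω * g ω ∂μ| ≤ ∫ ω, |f ω * g ω| ∂μ := abs_integral_le_integral_abs
    _ = ∫ ω, |f ω| * |g ω| ∂μ := by simp only [abs_mul]
    _ ≤ _ := holder

lemma sq_ciSup_sub_le_sum_sq {ι : Type*} [Fintype ι] [Nonempty ι] (x : ι → ℝ) (a : ℝ) :
    ((⨆ k, x k) - a) ^ 2 ≤ ∑ k, (x k - a) ^ 2 := by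
  obtain ⟨m, hm⟩ := exists_eq_ciSup_of_finite (f := x)
  rw [← hm]
  exact Finset.single_le_sum (f := fun k => (x k - a) ^ 2) (fun k _ => sq_nonneg _)
    (Finset.mem_univ m)

section Maximum

variable {ι : Type*} [Fintype ι] {X : ι → Ω → ℝ}

lemma memLp_two_ciSup_sub (hX : ∀ k, MemLp (X k) 2 μ) (i : ι) :
    MemLp (fun ω => (⨆ k, X k ω) - X i ω) 2 μ := by
  have : Nonempty ι := ⟨i⟩
  have hmeas : AEStronglyMeasurable (fun ω => (⨆ k, X k ω) - X i ω) μ :=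
    ((AEMeasurable.iSup fun k => (hX k).aemeasurable).sub
      (hX i).aemeasurable).aestronglyMeasurable
  have hsum : Integrable (fun ω => ∑ k, (X k ω - X i ω) ^ 2) μ :=
    integrable_finsetSum _ fun k _ => ((hX k).sub (hX i)).integrable_sq
  rw [memLp_two_iff_integrable_sq hmeas]
  refine hsum.mono' (hmeas.pow 2) (.of_forall fun ω => ?_)
  rw [Real.norm_of_nonneg (sq_nonneg _)]
  exact sq_ciSup_sub_le_sum_sq (fun k => X k ω) (X i ω)

lemma integral_sq_ciSup_sub_le_sum (hX : ∀ k, MemLp (X k) 2 μ) (i : ι) :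
    ∫ ω, ((⨆ k, X k ω) - X i ω) ^ 2 ∂μ ≤ ∑ k, ∫ ω, (X k ω - X i ω) ^ 2 ∂μ := by
  have : Nonempty ι := ⟨i⟩
  have hint k : Integrable (fun ω => (X k ω - X i ω) ^ 2) μ :=
    ((hX k).sub (hX i)).integrable_sq
  rw [← integral_finsetSum _ fun k _ => hint k]
  exact integral_mono (memLp_two_ciSup_sub hX i).integrable_sq
    (integrable_finsetSum _ fun k _ => hint k)
    fun ω => sq_ciSup_sub_le_sum_sq (fun k => X k ω) (X i ω)

end Maximum

section Independent

variable [IsProbabilityMeasure μ] {X Y : Ω → ℝ}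

lemma ProbabilityTheory.IndepFun.integral_sub_sq (hXY : IndepFun X Y μ)
    (hX : MemLp X 2 μ) (hY : MemLp Y 2 μ)
    (hmean : μ[X] = μ[Y]) :
    ∫ ω, (X ω - Y ω) ^ 2 ∂μ = Var[X; μ] + Var[Y; μ] := by
  have hvar := variance_eq_integral (hX.sub hY).aemeasurable
  rw [integral_sub' (hX.integrable one_le_two) (hY.integrable one_le_two), hmean, sub_self] at hvar
  simp only [Pi.sub_apply, sub_zero] at hvar
  rw [← hvar, variance_sub hX hY, hXY.covariance_eq_zero hX hY]
  ring

lemma ProbabilityTheory.IndepFun.integral_mul_sub_self (hXY : IndepFun X Y μ)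
    (hX : MemLp X 2 μ) (hY : MemLp Y 2 μ)
    (hmean : μ[X] = μ[Y]) :
    ∫ ω, X ω * (Y ω - X ω) ∂μ = -Var[X; μ] := by
  have hcov := covariance_eq_sub hX (hY.sub hX)
  rw [integral_sub' (hY.integrable one_le_two) (hX.integrable one_le_two), hmean, sub_self,
    mul_zero, sub_zero, covariance_sub_right hX hY hX, hXY.covariance_eq_zero hX hY,
    covariance_self hX.aemeasurable] at hcov
  simp only [Pi.mul_apply, Pi.sub_apply] at hcov
  linarith

theorem abs_integral_ciSup_mul_sub_le {ι : Type*} [Fintype ι] {X : ι → Ω → ℝ}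
    (hX : ∀ k, MemLp (X k) 2 μ) (hindep : Pairwise fun k l => IndepFun (X k) (X l) μ)
    {m V : ℝ} (hmean : ∀ k, μ[X k] = m) (hvar : ∀ k, Var[X k; μ] ≤ V) {i j : ι} (hij : i ≠ j) :
    |∫ ω, (⨆ k, X k ω) * (X j ω - X i ω) ∂μ| ≤ (2 * √(Fintype.card ι) + 1) * V := by
  have hV : 0 ≤ V := (variance_nonneg _ _).trans (hvar i)
  have hpair k : ∫ ω, (X k ω - X i ω) ^ 2 ∂μ ≤ 2 * V := by
    rcases eq_or_ne k i with rfl | hki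
    · simp only [sub_self, ne_eq, OfNat.ofNat_ne_zero, not_false_eq_true, zero_pow,
        integral_zero]
      positivity
    · rw [(hindep hki).integral_sub_sq (hX k) (hX i) ((hmean k).trans (hmean i).symm)]
      linarith [hvar k, hvar i]
  have hmax : ∫ ω, ((⨆ k, X k ω) - X i ω) ^ 2 ∂μ ≤ Fintype.card ι * (2 * V) :=
    calc _ ≤ ∑ k, ∫ ω, (X k ω - X i ω) ^ 2 ∂μ := integral_sq_ciSup_sub_le_sum hX i
      _ ≤ ∑ _k : ι, 2 * V := Finset.sum_le_sum fun k _ => hpair k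
      _ = _ := by simp
  have hji : MemLp (fun ω => X j ω - X i ω) 2 μ := (hX j).sub (hX i)
  have hsplit : ∫ ω, (⨆ k, X k ω) * (X j ω - X i ω) ∂μ =
      ∫ ω, ((⨆ k, X k ω) - X i ω) * (X j ω - X i ω) ∂μ +
        ∫ ω, X i ω * (X j ω - X i ω) ∂μ := by
    have h := integral_add ((memLp_two_ciSup_sub hX i).integrable_mul hji)
      ((hX i).integrable_mul hji)
    simp only [Pi.mul_apply] at h
    rw [← h]
    congr with ω
    ring
  have hfirst :
      |∫ ω, ((⨆ k, X k ω) - X i ω) * (X j ω - X i ω) ∂μ| ≤ 2 * √(Fintype.card ι) * V :=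
    calc _ ≤ √(Fintype.card ι * (2 * V)) * √(2 * V) :=
          (abs_integral_mul_le_sqrt_mul_sqrt (memLp_two_ciSup_sub hX i) hji).trans
            (by gcongr; exact hpair j)
      _ = 2 * √(Fintype.card ι) * V := by
          rw [Real.sqrt_mul (Nat.cast_nonneg _), mul_assoc, Real.mul_self_sqrt (by positivity)]
          ring
  have hsecond : |∫ ω, X i ω * (X j ω - X i ω) ∂μ| ≤ V := by
    rw [(hindep hij).integral_mul_sub_self (hX i) (hX j) ((hmean i).trans (hmean j).symm),
      abs_neg, abs_of_nonneg (variance_nonneg _ _)]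
    exact hvar i
  calc _ ≤ _ := hsplit ▸ abs_add_le _ _
    _ ≤ 2 * √(Fintype.card ι) * V + V := add_le_add hfirst hsecond
    _ = _ := by ring

end Independent

end

theorem abs_expectation_max_diff_bound_general {Ω : Type*} [MeasurableSpace Ω]
    (μ : Measure Ω) [IsProbabilityMeasure μ] (K : ℕ)
    (p : Fin K → Ω → ℝ) (N : Fin K → ℕ) (θ : ℝ)
    (hθ0 : 0 < θ) (hθ1 : θ < 1) (hN : ∀ i, 0 < N i)
    (hL2 : ∀ i, MemLp (p i) 2 μ)
    (hindep : iIndepFun p μ)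
    (hmean : ∀ i, ∫ ω, p i ω ∂μ = θ)
    (hvar : ∀ i, ∫ ω, (p i ω - θ) ^ 2 ∂μ = θ * (1 - θ) / N i)
    (i j : Fin K) (hij : i ≠ j) :
    |∫ ω, (⨆ k, p k ω) * (p j ω - p i ω) ∂μ| ≤
      (2 * Real.sqrt K + 1) * θ * (1 - θ) / (⨅ k, (N k : ℝ)) := by
  have : Nonempty (Fin K) := ⟨i⟩
  obtain ⟨m, hm⟩ := exists_eq_ciInf_of_finite (f := fun k => (N k : ℝ))
  have hvar_le k : Var[p k; μ] ≤ θ * (1 - θ) / ⨅ k, (N k : ℝ) := by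
    rw [variance_eq_integral (hL2 k).aemeasurable, hmean k, hvar k]
    have hθ : 0 ≤ θ * (1 - θ) := mul_nonneg hθ0.le (sub_nonneg.mpr hθ1.le)
    gcongr
    · exact hm ▸ Nat.cast_pos.mpr (hN m)
    · exact ciInf_le (Finite.bddBelow_range _) k
  have hbound :=
    abs_integral_ciSup_mul_sub_le hL2 (fun k l hkl => hindep.indepFun hkl) hmean hvar_le hij
  rw [Fintype.card_fin] at hbound
  exact hbound.trans_eq (by ring)

/-- Let `p₁, ..., p_K` be independent random variables with common mean `θ` and
`Var(p_i) = θ(1−θ)/N_i`, and let `p = max_i p_i`, `N_(1) = min_i N_i`. Then for any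
`i ≠ j`, `|E[p (p_j − p_i)]| ≤ (2√K + 1) θ(1−θ)/N_(1)`. -/
theorem abs_expectation_max_diff_bound {Ω : Type*} [MeasurableSpace Ω]
    (μ : Measure Ω) [IsProbabilityMeasure μ] (K : ℕ) [NeZero K]
    (p : Fin K → Ω → ℝ) (N : Fin K → ℕ) (θ : ℝ)
    (hθ0 : 0 < θ) (hθ1 : θ < 1) (hN : ∀ i, 0 < N i)
    (hmeas : ∀ i, Measurable (p i))
    (hL2 : ∀ i, MemLp (p i) 2 μ)
    (hindep : iIndepFun p μ)
    (hmean : ∀ i, ∫ ω, p i ω ∂μ = θ)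
    (hvar : ∀ i, ∫ ω, (p i ω - θ) ^ 2 ∂μ = θ * (1 - θ) / N i)
    (i j : Fin K) (hij : i ≠ j) :
    |∫ ω, (⨆ k, p k ω) * (p j ω - p i ω) ∂μ| ≤
      (2 * Real.sqrt K + 1) * θ * (1 - θ) / (⨅ k, (N k : ℝ)) :=
  abs_expectation_max_diff_bound_general μ K p N θ hθ0 hθ1 hN hL2 hindep hmean hvar i j hij
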